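/- Let {h_i}_{i∈𝓘_N} be a D-system on [0,1]. Then for every x ∈ [0,1] there exists an infinite sequence (i_n)_{n≥1} with values in 𝓘_N such that x = lim_{n→∞} h_{i_1}∘⋯∘h_{i_n}(0) = lim_{n→∞} h_{i_1}∘⋯∘h_{i_n}(1). Moreover, if x ∈ 𝓓_h \ {0,1} then there exist exactly two such infinite sequences, and otherwise there exists exactly one such infinite sequence. -/
import Mathlib


open Set Filter Topology

/-- A compatible system of `N` maps on `[0,1]`: each map is continuous and strictly
increasing on `[0,1]`, maps `[0,1]` into `[0,1]`, `h 0 0 = 0`, `h (i-1) 1 = h i 0`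
for `1 ≤ i ≤ N-1`, and `h (N-1) 1 = 1`. -/
def CompatibleSystem (N : ℕ) (h : ℕ → ℝ → ℝ) : Prop :=
  (∀ i < N, Set.MapsTo (h i) (Set.Icc (0:ℝ) 1) (Set.Icc (0:ℝ) 1)) ∧
  (∀ i < N, ContinuousOn (h i) (Set.Icc (0:ℝ) 1)) ∧
  (∀ i < N, StrictMonoOn (h i) (Set.Icc (0:ℝ) 1)) ∧
  h 0 0 = 0 ∧
  (∀ i, 1 ≤ i → i < N → h (i - 1) 1 = h i 0) ∧
  h (N - 1) 1 = 1

/-- `h_{σ₁} ∘ ⋯ ∘ h_{σₙ} (x)` for a finite word `σ`. -/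
def wordComp (h : ℕ → ℝ → ℝ) (σ : List ℕ) (x : ℝ) : ℝ :=
  σ.foldr (fun i y => h i y) x

/-- The set `𝓓_h = {h_{i₁} ∘ ⋯ ∘ h_{iₙ}(j) : n ≥ 1, i₁,…,iₙ < N, j ∈ {0,1}}`. -/
def DSet (N : ℕ) (h : ℕ → ℝ → ℝ) : Set ℝ :=
  {x | ∃ σ : List ℕ, σ ≠ [] ∧ (∀ i ∈ σ, i < N) ∧ ∃ j : ℝ, (j = 0 ∨ j = 1) ∧ x = wordComp h σ j}

/-- A D-system: a compatible system whose set `𝓓_h` is dense in `[0,1]`. -/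
def IsDSystem (N : ℕ) (h : ℕ → ℝ → ℝ) : Prop :=
  CompatibleSystem N h ∧ Set.Icc (0:ℝ) 1 ⊆ closure (DSet N h)

/-- `h_{i 0} ∘ h_{i 1} ∘ ⋯ ∘ h_{i (n-1)} (x)` for an infinite sequence `i`. -/
def seqComp (h : ℕ → ℝ → ℝ) (i : ℕ → ℕ) (n : ℕ) (x : ℝ) : ℝ :=
  wordComp h (List.ofFn fun k : Fin n => i k) x


/-- The set of infinite sequences `i` in `𝓘_N` whose partial compositions at both
`0` and `1` converge to `x`. -/
def limSeqs (N : ℕ) (h : ℕ → ℝ → ℝ) (x : ℝ) : Set (ℕ → ℕ) :=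
  {i | (∀ n, i n < N) ∧
    Tendsto (fun n => seqComp h i n 0) atTop (𝓝 x) ∧
    Tendsto (fun n => seqComp h i n 1) atTop (𝓝 x)}

namespace StmtAux

variable {N : ℕ} {h : ℕ → ℝ → ℝ}

lemma wordComp_nil (x : ℝ) : wordComp h [] x = x := rfl
lemma wordComp_cons (s : ℕ) (σ : List ℕ) (x : ℝ) :
    wordComp h (s :: σ) x = h s (wordComp h σ x) := rfl
lemma wordComp_append (σ τ : List ℕ) (x : ℝ) :
    wordComp h (σ ++ τ) x = wordComp h σ (wordComp h τ x) := by
  simp [wordComp, List.foldr_append]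

section Compat
variable (cs : CompatibleSystem N h) (hN : 2 ≤ N)
include cs

lemma ep0_mem {i : ℕ} (hi : i < N) : h i 0 ∈ Icc (0:ℝ) 1 :=
  cs.1 i hi (by norm_num)
lemma ep1_mem {i : ℕ} (hi : i < N) : h i 1 ∈ Icc (0:ℝ) 1 :=
  cs.1 i hi (by norm_num)
lemma ep_lt {i : ℕ} (hi : i < N) : h i 0 < h i 1 :=
  cs.2.2.1 i hi (by norm_num) (by norm_num) (by norm_num)

/-- chain: s < t < N → h s 1 ≤ h t 0 -/
lemma chain {s t : ℕ} (hst : s < t) (ht : t < N) : h s 1 ≤ h t 0 := by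
  induction t with
  | zero => omega
  | succ t ih =>
    have hlink : h t 1 = h (t+1) 0 := by
      have := cs.2.2.2.2.1 (t+1) (by omega) ht
      simpa using this
    rcases Nat.lt_succ_iff_lt_or_eq.mp hst with hlt | heq
    · exact le_trans (le_trans (ih hlt (by omega)) (le_of_lt (ep_lt cs (by omega)))) hlink.le
    · subst heq; exact hlink.le

lemma word_mapsTo {σ : List ℕ} (hσ : ∀ i ∈ σ, i < N) {y : ℝ} (hy : y ∈ Icc (0:ℝ) 1) :
    wordComp h σ y ∈ Icc (0:ℝ) 1 := by
  induction σ with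
  | nil => exact hy
  | cons s σ ih =>
    exact cs.1 s (hσ s (by simp)) (ih (fun i hi => hσ i (List.mem_cons_of_mem _ hi)))

lemma word_mono {σ : List ℕ} (hσ : ∀ i ∈ σ, i < N) {y z : ℝ}
    (hy : y ∈ Icc (0:ℝ) 1) (hz : z ∈ Icc (0:ℝ) 1) (hyz : y ≤ z) :
    wordComp h σ y ≤ wordComp h σ z := by
  induction σ with
  | nil => exact hyz
  | cons s σ ih =>
    have hs : s < N := hσ s (by simp)
    have h1 := word_mapsTo cs (fun i hi => hσ i (List.mem_cons_of_mem _ hi)) hy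
    have h2 := word_mapsTo cs (fun i hi => hσ i (List.mem_cons_of_mem _ hi)) hz
    exact (cs.2.2.1 s hs).monotoneOn h1 h2 (ih (fun i hi => hσ i (List.mem_cons_of_mem _ hi)))

lemma word_strictMono {σ : List ℕ} (hσ : ∀ i ∈ σ, i < N) {y z : ℝ}
    (hy : y ∈ Icc (0:ℝ) 1) (hz : z ∈ Icc (0:ℝ) 1) (hyz : y < z) :
    wordComp h σ y < wordComp h σ z := by
  induction σ with
  | nil => exact hyz
  | cons s σ ih =>
    have hs : s < N := hσ s (by simp)
    have h1 := word_mapsTo cs (fun i hi => hσ i (List.mem_cons_of_mem _ hi)) hy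
    have h2 := word_mapsTo cs (fun i hi => hσ i (List.mem_cons_of_mem _ hi)) hz
    exact cs.2.2.1 s hs h1 h2 (ih (fun i hi => hσ i (List.mem_cons_of_mem _ hi)))

lemma word_inj {σ : List ℕ} (hσ : ∀ i ∈ σ, i < N) {y z : ℝ}
    (hy : y ∈ Icc (0:ℝ) 1) (hz : z ∈ Icc (0:ℝ) 1)
    (hyz : wordComp h σ y = wordComp h σ z) : y = z := by
  rcases lt_trichotomy y z with hc | hc | hc
  · exact absurd hyz (ne_of_lt (word_strictMono cs hσ hy hz hc))
  · exact hc
  · exact absurd hyz.symm (ne_of_lt (word_strictMono cs hσ hz hy hc))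

/-- separation: a D-point from a word of length ≤ |τ| cannot lie strictly inside the
interval of τ. -/
lemma sep : ∀ (τ σ : List ℕ), (∀ i ∈ τ, i < N) → (∀ i ∈ σ, i < N) →
    σ.length ≤ τ.length → ∀ j : ℝ, (j = 0 ∨ j = 1) →
    wordComp h σ j ≤ wordComp h τ 0 ∨ wordComp h τ 1 ≤ wordComp h σ j := by
  intro τ
  induction τ with
  | nil =>
    intro σ _ _ hlen j hj
    have : σ = [] := List.length_eq_zero_iff.mp (Nat.le_zero.mp hlen)
    subst this
    rcases hj with hj | hj <;> subst hj <;> simp [wordComp_nil]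
  | cons t τ' ih =>
    intro σ hτ hσ hlen j hj
    have ht : t < N := hτ t (by simp)
    have hτ' : ∀ i ∈ τ', i < N := fun i hi => hτ i (by simp [hi])
    cases σ with
    | nil =>
      rcases hj with hj | hj <;> subst hj
      · exact Or.inl (by simpa [wordComp_nil] using
          (word_mapsTo cs hτ (by norm_num : (0:ℝ) ∈ Icc (0:ℝ) 1)).1)
      · exact Or.inr (by simpa [wordComp_nil] using
          (word_mapsTo cs hτ (by norm_num : (1:ℝ) ∈ Icc (0:ℝ) 1)).2)
    | cons s σ' =>
      have hs : s < N := hσ s (by simp)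
      have hσ' : ∀ i ∈ σ', i < N := fun i hi => hσ i (List.mem_cons_of_mem _ hi)
      have hjm : j ∈ Icc (0:ℝ) 1 := by rcases hj with hj | hj <;> subst hj <;> norm_num
      have hwj := word_mapsTo cs hσ' hjm
      have hw0 := word_mapsTo cs hτ' (by norm_num : (0:ℝ) ∈ Icc (0:ℝ) 1)
      have hw1 := word_mapsTo cs hτ' (by norm_num : (1:ℝ) ∈ Icc (0:ℝ) 1)
      rcases lt_trichotomy s t with hst | hst | hst
      · left
        rw [wordComp_cons, wordComp_cons]
        calc h s (wordComp h σ' j) ≤ h s 1 :=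
              (cs.2.2.1 s hs).monotoneOn hwj (by norm_num) hwj.2
          _ ≤ h t 0 := chain cs hst ht
          _ ≤ h t (wordComp h τ' 0) :=
              (cs.2.2.1 t ht).monotoneOn (by norm_num) hw0 hw0.1
      · subst hst
        have hlen' : σ'.length ≤ τ'.length := by simpa using hlen
        rcases ih σ' hτ' hσ' hlen' j hj with hc | hc
        · left
          rw [wordComp_cons, wordComp_cons]
          exact (cs.2.2.1 s hs).monotoneOn hwj hw0 hc
        · right
          rw [wordComp_cons, wordComp_cons]
          exact (cs.2.2.1 s hs).monotoneOn hw1 hwj hc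
      · right
        rw [wordComp_cons, wordComp_cons]
        calc h t (wordComp h τ' 1) ≤ h t 1 :=
              (cs.2.2.1 t ht).monotoneOn hw1 (by norm_num) hw1.2
          _ ≤ h s 0 := chain cs hst hs
          _ ≤ h s (wordComp h σ' j) :=
              (cs.2.2.1 s hs).monotoneOn (by norm_num) hwj hwj.1


end Compat
end StmtAux

namespace StmtAux
variable {N : ℕ} {h : ℕ → ℝ → ℝ}

lemma seqComp_zero (i : ℕ → ℕ) (y : ℝ) : seqComp h i 0 y = y := by
  simp [seqComp, wordComp]

lemma ofFn_succ_concat (i : ℕ → ℕ) (n : ℕ) :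
    (List.ofFn fun k : Fin (n+1) => i k) = (List.ofFn fun k : Fin n => i k) ++ [i n] := by
  rw [List.ofFn_succ']
  simp [List.concat_eq_append, Fin.last]

lemma seqComp_succ (i : ℕ → ℕ) (n : ℕ) (y : ℝ) :
    seqComp h i (n+1) y = seqComp h i n (h (i n) y) := by
  rw [seqComp, ofFn_succ_concat, wordComp_append]
  rfl

lemma mem_ofFn_lt {i : ℕ → ℕ} (hi : ∀ n, i n < N) (n : ℕ) :
    ∀ j ∈ (List.ofFn fun k : Fin n => i k), j < N := by
  intro j hj
  rw [List.mem_ofFn] at hj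
  obtain ⟨k, rfl⟩ := hj
  exact hi k

section Compat
variable (cs : CompatibleSystem N h)
include cs

lemma seq_l_mono {i : ℕ → ℕ} (hi : ∀ n, i n < N) :
    Monotone (fun n => seqComp h i n 0) := by
  apply monotone_nat_of_le_succ
  intro n
  rw [seqComp_succ]
  exact word_mono cs (mem_ofFn_lt hi n) (by norm_num) (ep0_mem cs (hi n)) (ep0_mem cs (hi n)).1

lemma seq_r_anti {i : ℕ → ℕ} (hi : ∀ n, i n < N) :
    Antitone (fun n => seqComp h i n 1) := by
  apply antitone_nat_of_succ_le
  intro n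
  rw [seqComp_succ]
  exact word_mono cs (mem_ofFn_lt hi n) (ep1_mem cs (hi n)) (by norm_num) (ep1_mem cs (hi n)).2

lemma seq_mem {i : ℕ → ℕ} (hi : ∀ n, i n < N) (n : ℕ) {y : ℝ} (hy : y ∈ Icc (0:ℝ) 1) :
    seqComp h i n y ∈ Icc (0:ℝ) 1 :=
  word_mapsTo cs (mem_ofFn_lt hi n) hy

/-- the next-letter step lemma -/
lemma stepLemma (hN : 2 ≤ N) {σ : List ℕ} (hσ : ∀ i ∈ σ, i < N) {x : ℝ}
    (hl : wordComp h σ 0 ≤ x) (hr : x ≤ wordComp h σ 1) :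
    ∃ c < N, wordComp h σ (h c 0) ≤ x ∧ x ≤ wordComp h σ (h c 1) := by
  classical
  have hP : x ≤ wordComp h σ (h (N-1) 1) := by
    rw [cs.2.2.2.2.2]; exact hr
  have hex : ∃ c, x ≤ wordComp h σ (h c 1) := ⟨N-1, hP⟩
  set c := Nat.find hex with hc
  have hcspec := Nat.find_spec hex
  have hcle : c ≤ N - 1 := Nat.find_min' hex hP
  have hcN : c < N := by omega
  refine ⟨c, hcN, ?_, hcspec⟩
  rcases Nat.eq_zero_or_pos c with h0 | h0
  · rw [h0]
    rw [show h 0 0 = (0:ℝ) from cs.2.2.2.1]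
    exact hl
  · have hmin : ¬ x ≤ wordComp h σ (h (c-1) 1) := Nat.find_min hex (by omega)
    have hlink : h (c-1) 1 = h c 0 := cs.2.2.2.2.1 c h0 hcN
    rw [← hlink]
    exact le_of_not_ge hmin

end Compat
end StmtAux

namespace StmtAux
variable {N : ℕ} {h : ℕ → ℝ → ℝ}
section Compat
variable (cs : CompatibleSystem N h)
include cs

/-- Key density lemma: if x stays inside all the nested intervals, then i ∈ limSeqs. -/
lemma mem_limSeqs_of_forall (hN : 2 ≤ N) (hdense : Icc (0:ℝ) 1 ⊆ closure (DSet N h))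
    {x : ℝ} {i : ℕ → ℕ} (hi : ∀ n, i n < N)
    (hmem : ∀ n, seqComp h i n 0 ≤ x ∧ x ≤ seqComp h i n 1) :
    i ∈ limSeqs N h x := by
  set l := fun n => seqComp h i n 0 with hl
  set r := fun n => seqComp h i n 1 with hr
  have hlmono : Monotone l := seq_l_mono cs hi
  have hranti : Antitone r := seq_r_anti cs hi
  have hl0 : l 0 = 0 := seqComp_zero i 0
  have hr0 : r 0 = 1 := seqComp_zero i 1
  have hbddl : BddAbove (Set.range l) := ⟨x, by rintro _ ⟨n, rfl⟩; exact (hmem n).1⟩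
  have hbddr : BddBelow (Set.range r) := ⟨x, by rintro _ ⟨n, rfl⟩; exact (hmem n).2⟩
  set L := ⨆ n, l n with hL
  set R := ⨅ n, r n with hR
  have htl : Tendsto l atTop (𝓝 L) := tendsto_atTop_ciSup hlmono hbddl
  have htr : Tendsto r atTop (𝓝 R) := tendsto_atTop_ciInf hranti hbddr
  have hLx : L ≤ x := ciSup_le fun n => (hmem n).1
  have hxR : x ≤ R := le_ciInf fun n => (hmem n).2
  have hlL : ∀ n, l n ≤ L := fun n => le_ciSup hbddl n
  have hRr : ∀ n, R ≤ r n := fun n => ciInf_le hbddr n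
  have hLR : L = R := by
    by_contra hne
    have hLltR : L < R := lt_of_le_of_ne (le_trans hLx hxR) hne
    set m := (L + R) / 2 with hm
    have hmIcc : m ∈ Icc (0:ℝ) 1 := by
      constructor
      · have : (0:ℝ) ≤ L := hl0 ▸ hlL 0
        linarith
      · have : R ≤ 1 := hr0 ▸ hRr 0
        linarith
    have hmcl : m ∈ closure (DSet N h) := hdense hmIcc
    have hopen : Ioo L R ∈ 𝓝 m := Ioo_mem_nhds (by linarith) (by linarith)
    obtain ⟨d, hdIoo, hdD⟩ := mem_closure_iff_nhds.mp hmcl _ hopen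
    obtain ⟨σ, hσne, hσN, j, hj, hdj⟩ := hdD
    set n := σ.length with hn
    have hsep := sep cs (List.ofFn fun k : Fin n => i k) σ (mem_ofFn_lt hi n) hσN
      (by simp [hn]) j hj
    rw [← hdj] at hsep
    have h1 : l n < d := lt_of_le_of_lt (hlL n) hdIoo.1
    have h2 : d < r n := lt_of_lt_of_le hdIoo.2 (hRr n)
    rcases hsep with hc | hc
    · exact absurd hc (not_le.mpr h1)
    · exact absurd hc (not_le.mpr h2)
  have hLeq : L = x := le_antisymm hLx (hLR ▸ hxR)
  have hReq : R = x := le_antisymm (hLR ▸ hLeq ▸ le_refl x) hxR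
  exact ⟨hi, hLeq ▸ htl, hReq ▸ htr⟩

/-- converse: membership in limSeqs gives the sandwich at every stage. -/
lemma sandwich_of_mem {x : ℝ} {i : ℕ → ℕ} (hmem : i ∈ limSeqs N h x) (n : ℕ) :
    seqComp h i n 0 ≤ x ∧ x ≤ seqComp h i n 1 := by
  obtain ⟨hi, htl, htr⟩ := hmem
  constructor
  · exact ge_of_tendsto htl (Filter.eventually_atTop.mpr
      ⟨n, fun m hm => seq_l_mono cs hi hm⟩)
  · exact le_of_tendsto htr (Filter.eventually_atTop.mpr
      ⟨n, fun m hm => seq_r_anti cs hi hm⟩)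

end Compat
end StmtAux

namespace StmtAux
variable {N : ℕ} {h : ℕ → ℝ → ℝ}
section Exist
variable (cs : CompatibleSystem N h) (hN : 2 ≤ N) (x : ℝ)

open Classical in
/-- the next letter chosen greedily for `x` given current word `σ`. -/
noncomputable def step (σ : List ℕ) : ℕ :=
  if hcond : (∀ i ∈ σ, i < N) ∧ wordComp h σ 0 ≤ x ∧ x ≤ wordComp h σ 1 then
    Classical.choose (stepLemma cs hN hcond.1 hcond.2.1 hcond.2.2)
  else 0

/-- the word of length n -/
noncomputable def word : ℕ → List ℕ
  | 0 => []
  | n+1 => word n ++ [step cs hN x (word n)]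

/-- the address sequence -/
noncomputable def addr (n : ℕ) : ℕ := step cs hN x (word cs hN x n)

variable {x}

lemma word_invariant (hx : x ∈ Icc (0:ℝ) 1) (n : ℕ) :
    (∀ i ∈ word cs hN x n, i < N) ∧
      wordComp h (word cs hN x n) 0 ≤ x ∧ x ≤ wordComp h (word cs hN x n) 1 := by
  induction n with
  | zero =>
    refine ⟨by simp [word], ?_, ?_⟩ <;> simp [word, wordComp_nil]
    · exact hx.1
    · exact hx.2
  | succ n ih =>
    have hstep := Classical.choose_spec (stepLemma cs hN ih.1 ih.2.1 ih.2.2)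
    have hseq : step cs hN x (word cs hN x n) =
        Classical.choose (stepLemma cs hN ih.1 ih.2.1 ih.2.2) := by
      rw [step, dif_pos ih]
    refine ⟨?_, ?_, ?_⟩
    · intro i hi
      rw [word] at hi
      rcases List.mem_append.mp hi with hi | hi
      · exact ih.1 i hi
      · simp at hi
        rw [hi, hseq]
        exact hstep.1
    · rw [word, wordComp_append, wordComp_cons, wordComp_nil, hseq]
      exact hstep.2.1
    · rw [word, wordComp_append, wordComp_cons, wordComp_nil, hseq]
      exact hstep.2.2

lemma word_eq_ofFn (hx : x ∈ Icc (0:ℝ) 1) (n : ℕ) :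
    (List.ofFn fun k : Fin n => addr cs hN x k) = word cs hN x n := by
  induction n with
  | zero => simp [word]
  | succ n ih =>
    rw [ofFn_succ_concat, ih, word]
    rfl

lemma addr_mem_limSeqs (hdense : Icc (0:ℝ) 1 ⊆ closure (DSet N h)) (hx : x ∈ Icc (0:ℝ) 1) :
    addr cs hN x ∈ limSeqs N h x := by
  have hiN : ∀ n, addr cs hN x n < N := by
    intro n
    have := (word_invariant cs hN hx (n+1)).1
    apply this
    rw [word]
    simp [addr]
  apply mem_limSeqs_of_forall cs hN hdense hiN
  intro n
  have := word_invariant cs hN hx n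
  rw [seqComp, seqComp, word_eq_ofFn cs hN hx n]
  exact this.2

end Exist
end StmtAux

namespace StmtAux
variable {N : ℕ} {h : ℕ → ℝ → ℝ}
section LemB
variable (cs : CompatibleSystem N h) (hN : 2 ≤ N)
include cs

lemma eq_last_of_top {j : ℕ} (hj : j < N) (hone : h j 1 = 1) : j = N - 1 := by
  by_contra hne
  have hjlt : j < N - 1 := by omega
  have h1 : h j 1 ≤ h (N-1) 0 := chain cs hjlt (by omega)
  have h2 : h (N-1) 0 < h (N-1) 1 := ep_lt cs (by omega)
  rw [cs.2.2.2.2.2] at h2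
  rw [hone] at h1
  linarith

lemma eq_zero_of_bot {j : ℕ} (hj : j < N) (hzero : h j 0 = 0) : j = 0 := by
  by_contra hne
  have h1 : h 0 1 ≤ h j 0 := chain cs (by omega) hj
  have h2 : h 0 0 < h 0 1 := ep_lt cs (by omega)
  rw [cs.2.2.2.1] at h2
  rw [hzero] at h1
  linarith

/-- Branching lemma: two distinct addresses force everything. -/
lemma lemB {x : ℝ} {i i' : ℕ → ℕ} (hi : i ∈ limSeqs N h x) (hi' : i' ∈ limSeqs N h x)
    {n : ℕ} (hpre : ∀ k < n, i k = i' k) (hlt : i n < i' n) :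
    (∀ k, n < k → i k = N - 1) ∧ (∀ k, n < k → i' k = 0) ∧ i' n = i n + 1 ∧
      x = wordComp h (List.ofFn fun k : Fin n => i k) (h (i n) 1) := by
  have hiN := hi.1
  have hi'N := hi'.1
  set τ := List.ofFn fun k : Fin n => i k with hτ
  have hτ' : (List.ofFn fun k : Fin n => i' k) = τ := by
    rw [hτ]
    exact congrArg List.ofFn (funext fun k => (hpre k k.isLt).symm)
  have hτN : ∀ j ∈ τ, j < N := mem_ofFn_lt hiN n
  -- sandwich at n+1
  have hs1 := (sandwich_of_mem cs hi (n+1)).2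
  have hs2 := (sandwich_of_mem cs hi' (n+1)).1
  rw [seqComp_succ] at hs1 hs2
  rw [seqComp] at hs1 hs2
  rw [hτ'] at hs2
  -- wordComp τ (h (i n) 1) ≤ wordComp τ (h (i' n) 0) by chain
  have hch : h (i n) 1 ≤ h (i' n) 0 := chain cs hlt (hi'N n)
  have hm1 : h (i n) 1 ∈ Icc (0:ℝ) 1 := ep1_mem cs (hiN n)
  have hm0 : h (i' n) 0 ∈ Icc (0:ℝ) 1 := ep0_mem cs (hi'N n)
  have hmw : wordComp h τ (h (i n) 1) ≤ wordComp h τ (h (i' n) 0) :=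
    word_mono cs hτN hm1 hm0 hch
  have hxeq : x = wordComp h τ (h (i n) 1) := le_antisymm hs1 (le_trans hmw hs2)
  have hxeq' : x = wordComp h τ (h (i' n) 0) := le_antisymm (hxeq ▸ hmw) hs2
  have hep : h (i n) 1 = h (i' n) 0 :=
    word_inj cs hτN hm1 hm0 (hxeq ▸ hxeq')
  have hsucc : i' n = i n + 1 := by
    by_contra hne
    have hgt : i n + 1 < i' n := by omega
    have hNn : i' n < N := hi'N n
    have h1 : h (i n) 1 ≤ h (i n + 1) 0 := chain cs (by omega) (by omega)
    have h2 : h (i n + 1) 0 < h (i n + 1) 1 := ep_lt cs (by omega)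
    have h3 : h (i n + 1) 1 ≤ h (i' n) 0 := chain cs hgt (hi'N n)
    rw [hep] at h1
    linarith
  -- tails
  have hrconst : ∀ m, n + 1 ≤ m → seqComp h i m 1 = x := by
    intro m hm
    have hup : x ≤ seqComp h i m 1 := (sandwich_of_mem cs hi m).2
    have hdn : seqComp h i m 1 ≤ seqComp h i (n+1) 1 := seq_r_anti cs hiN hm
    have : seqComp h i (n+1) 1 = x := by
      rw [seqComp_succ, seqComp, ← hτ, ← hxeq]
    linarith
  have hlconst : ∀ m, n + 1 ≤ m → seqComp h i' m 0 = x := by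
    intro m hm
    have hdn : seqComp h i' m 0 ≤ x := (sandwich_of_mem cs hi' m).1
    have hup : seqComp h i' (n+1) 0 ≤ seqComp h i' m 0 := seq_l_mono cs hi'N hm
    have : seqComp h i' (n+1) 0 = x := by
      rw [seqComp_succ, seqComp, hτ', ← hxeq']
    linarith
  refine ⟨?_, ?_, hsucc, hxeq⟩
  · intro k hk
    have e1 : seqComp h i k 1 = x := hrconst k (by omega)
    have e2 : seqComp h i (k+1) 1 = x := hrconst (k+1) (by omega)
    rw [seqComp_succ] at e2
    have heq : seqComp h i k (h (i k) 1) = seqComp h i k 1 := by rw [e2, e1]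
    have := word_inj cs (mem_ofFn_lt hiN k) (ep1_mem cs (hiN k)) (by norm_num) heq
    exact eq_last_of_top cs (hiN k) this
  · intro k hk
    have e1 : seqComp h i' k 0 = x := hlconst k (by omega)
    have e2 : seqComp h i' (k+1) 0 = x := hlconst (k+1) (by omega)
    rw [seqComp_succ] at e2
    have heq : seqComp h i' k (h (i' k) 0) = seqComp h i' k 0 := by rw [e2, e1]
    have := word_inj cs (mem_ofFn_lt hi'N k) (ep0_mem cs (hi'N k)) (by norm_num) heq
    exact eq_zero_of_bot cs (hi'N k) this

/-- membership in DSet \ {0,1} from a normalized representation -/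
lemma mem_DSet_diff {x : ℝ} {τ : List ℕ} {c : ℕ} (hτ : ∀ j ∈ τ, j < N)
    (hc : c + 1 < N) (hx : x = wordComp h τ (h c 1)) :
    x ∈ DSet N h \ ({0, 1} : Set ℝ) := by
  have hcN : c < N := by omega
  constructor
  · refine ⟨τ ++ [c], by simp, ?_, 1, Or.inr rfl, ?_⟩
    · intro j hj
      rcases List.mem_append.mp hj with hj | hj
      · exact hτ j hj
      · simp at hj; omega
    · rw [wordComp_append, wordComp_cons, wordComp_nil, hx]
  · -- x ≠ 0 and x ≠ 1
    have h1 : h c 0 < h c 1 := ep_lt cs hcN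
    have h2 : h c 1 = h (c+1) 0 := cs.2.2.2.2.1 (c+1) (by omega) hc
    have h3 : h (c+1) 0 < h (c+1) 1 := ep_lt cs hc
    have hin : h c 1 ∈ Icc (0:ℝ) 1 := ep1_mem cs hcN
    have hgt0 : 0 < h c 1 := lt_of_le_of_lt (ep0_mem cs hcN).1 h1
    have hlt1 : h c 1 < 1 := by
      have := (ep1_mem cs hc).2
      rw [h2]; linarith
    have hx0 : 0 < x := by
      rw [hx]
      calc (0:ℝ) ≤ wordComp h τ 0 := (word_mapsTo cs hτ (by norm_num)).1
        _ < wordComp h τ (h c 1) := word_strictMono cs hτ (by norm_num) hin hgt0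
    have hx1 : x < 1 := by
      rw [hx]
      calc wordComp h τ (h c 1) < wordComp h τ 1 :=
            word_strictMono cs hτ hin (by norm_num) hlt1
        _ ≤ 1 := (word_mapsTo cs hτ (by norm_num)).2
    intro hmem
    rcases hmem with h0 | h1'
    · rw [h0] at hx0; exact lt_irrefl _ hx0
    · rw [mem_singleton_iff] at h1'; rw [h1'] at hx1; exact lt_irrefl _ hx1

end LemB
end StmtAux

namespace StmtAux
variable {N : ℕ} {h : ℕ → ℝ → ℝ}
section Norm
variable (cs : CompatibleSystem N h) (hN : 2 ≤ N)
include cs hN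

lemma normalize_aux : ∀ σ : List ℕ, (∀ i ∈ σ, i < N) → ∀ x : ℝ, x ≠ 0 → x ≠ 1 →
    ∀ j : ℝ, (j = 0 ∨ j = 1) → x = wordComp h σ j →
    ∃ (τ : List ℕ) (c : ℕ), (∀ j ∈ τ, j < N) ∧ c + 1 < N ∧ x = wordComp h τ (h c 1) := by
  intro σ
  induction σ using List.reverseRecOn with
  | nil =>
    intro _ x hx0 hx1 j hj hxj
    exfalso
    rw [wordComp_nil] at hxj
    rcases hj with hj | hj <;> rw [hj] at hxj
    · exact hx0 hxj
    · exact hx1 hxj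
  | append_singleton τ' d ih =>
    intro hσN x hx0 hx1 j hj hxj
    have hd : d < N := hσN d (by simp)
    have hτ'N : ∀ i ∈ τ', i < N := fun i hi => hσN i (by simp [hi])
    rw [wordComp_append, wordComp_cons, wordComp_nil] at hxj
    rcases hj with hj | hj <;> rw [hj] at hxj
    · rcases Nat.eq_zero_or_pos d with h0 | h0
      · rw [h0, cs.2.2.2.1] at hxj
        exact ih hτ'N x hx0 hx1 0 (Or.inl rfl) (by rw [hxj])
      · refine ⟨τ', d - 1, hτ'N, by omega, ?_⟩
        rw [cs.2.2.2.2.1 d h0 hd, hxj]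
    · by_cases hend : d = N - 1
      · rw [hend, cs.2.2.2.2.2] at hxj
        exact ih hτ'N x hx0 hx1 1 (Or.inr rfl) (by rw [hxj])
      · exact ⟨τ', d, hτ'N, by omega, hxj⟩

/-- normalization: points of DSet \ {0,1} have the canonical breakpoint form. -/
lemma normalize {x : ℝ} (hx : x ∈ DSet N h) (hx0 : x ≠ 0) (hx1 : x ≠ 1) :
    ∃ (τ : List ℕ) (c : ℕ), (∀ j ∈ τ, j < N) ∧ c + 1 < N ∧ x = wordComp h τ (h c 1) := by
  obtain ⟨σ, _, hσN, j, hj, hxj⟩ := hx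
  exact normalize_aux cs hN σ hσN x hx0 hx1 j hj hxj

end Norm

lemma word_replicate_top {N : ℕ} {h : ℕ → ℝ → ℝ} (cs : CompatibleSystem N h) (k : ℕ) :
    wordComp h (List.replicate k (N-1)) 1 = 1 := by
  induction k with
  | zero => rfl
  | succ k ih => rw [List.replicate_succ, wordComp_cons, ih, cs.2.2.2.2.2]

lemma word_replicate_bot {N : ℕ} {h : ℕ → ℝ → ℝ} (cs : CompatibleSystem N h) (k : ℕ) :
    wordComp h (List.replicate k 0) 0 = 0 := by
  induction k with
  | zero => rfl
  | succ k ih => rw [List.replicate_succ, wordComp_cons, ih, cs.2.2.2.1]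

lemma ofFn_getD (σ : List ℕ) (d : ℕ) (m : ℕ) :
    (List.ofFn fun k : Fin m => σ.getD k d) =
      σ.take m ++ List.replicate (m - σ.length) d := by
  induction m with
  | zero => simp
  | succ m ih =>
    rw [ofFn_succ_concat (fun k => σ.getD k d), ih]
    by_cases hm : m < σ.length
    · have h1 : σ.getD m d = σ.get ⟨m, hm⟩ := by
        rw [List.getD_eq_getElem _ _ hm]; rfl
      have h2 : m + 1 - σ.length = 0 := by omega
      have h3 : m - σ.length = 0 := by omega
      rw [h1, h2, h3]
      simp only [List.replicate_zero, List.append_nil]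
      rw [List.take_succ]
      simp [List.getElem?_eq_getElem hm]
    · push_neg at hm
      have h1 : σ.getD m d = d := List.getD_eq_default _ _ (by omega)
      have h2 : σ.take m = σ := List.take_of_length_le (by omega)
      have h3 : σ.take (m+1) = σ := List.take_of_length_le (by omega)
      rw [h1, h2, h3, List.append_assoc]
      congr 1
      rw [← List.replicate_succ' ]
      congr 1
      omega
end StmtAux


namespace StmtAux
variable {N : ℕ} {h : ℕ → ℝ → ℝ}
section Final
variable (cs : CompatibleSystem N h) (hN : 2 ≤ N)
include cs

lemma getD_lt {σ : List ℕ} (hσ : ∀ j ∈ σ, j < N) {d : ℕ} (hd : d < N) (k : ℕ) :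
    σ.getD k d < N := by
  by_cases hk : k < σ.length
  · rw [List.getD_eq_getElem _ _ hk]
    exact hσ _ (List.getElem_mem hk)
  · rw [List.getD_eq_default _ _ (by omega)]
    exact hd

include hN

lemma memU (hdense : Icc (0:ℝ) 1 ⊆ closure (DSet N h))
    {σ : List ℕ} (hσ : ∀ j ∈ σ, j < N) {x : ℝ} (hx : x = wordComp h σ 1) :
    (fun k => σ.getD k (N-1)) ∈ limSeqs N h x := by
  have hd : N - 1 < N := by omega
  have hiN : ∀ n, σ.getD n (N-1) < N := getD_lt cs hσ hd
  apply mem_limSeqs_of_forall cs hN hdense hiN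
  intro m
  have hword : (List.ofFn fun k : Fin m => σ.getD k (N-1)) =
      σ.take m ++ List.replicate (m - σ.length) (N-1) := ofFn_getD σ (N-1) m
  have htakeN : ∀ j ∈ σ.take m, j < N := fun j hj => hσ j (List.mem_of_mem_take hj)
  have hrepN : ∀ j ∈ List.replicate (m - σ.length) (N-1), j < N := by
    intro j hj
    rw [List.eq_of_mem_replicate hj]; exact hd
  have hdropN : ∀ j ∈ σ.drop m, j < N := fun j hj => hσ j (List.mem_of_mem_drop hj)
  have hxsplit : x = wordComp h (σ.take m) (wordComp h (σ.drop m) 1) := by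
    rw [hx, ← wordComp_append, List.take_append_drop]
  have hdrop1 : wordComp h (σ.drop m) 1 ∈ Icc (0:ℝ) 1 :=
    word_mapsTo cs hdropN (by norm_num)
  have hrep0 : wordComp h (List.replicate (m - σ.length) (N-1)) 0 ∈ Icc (0:ℝ) 1 :=
    word_mapsTo cs hrepN (by norm_num)
  constructor
  · -- seqComp 0 ≤ x
    rw [seqComp, hword, wordComp_append, hxsplit]
    apply word_mono cs htakeN hrep0 hdrop1
    by_cases hm : m ≤ σ.length
    · have : m - σ.length = 0 := by omega
      rw [this]
      simpa [wordComp_nil] using hdrop1.1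
    · have : σ.drop m = [] := List.drop_eq_nil_of_le (by omega)
      rw [this, wordComp_nil]
      exact hrep0.2
  · -- x ≤ seqComp 1
    rw [seqComp, hword, wordComp_append, word_replicate_top cs, hxsplit]
    exact word_mono cs htakeN hdrop1 (by norm_num) hdrop1.2

lemma memV (hdense : Icc (0:ℝ) 1 ⊆ closure (DSet N h))
    {σ : List ℕ} (hσ : ∀ j ∈ σ, j < N) {x : ℝ} (hx : x = wordComp h σ 0) :
    (fun k => σ.getD k 0) ∈ limSeqs N h x := by
  have hd : 0 < N := by omega
  have hiN : ∀ n, σ.getD n 0 < N := getD_lt cs hσ hd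
  apply mem_limSeqs_of_forall cs hN hdense hiN
  intro m
  have hword : (List.ofFn fun k : Fin m => σ.getD k 0) =
      σ.take m ++ List.replicate (m - σ.length) 0 := ofFn_getD σ 0 m
  have htakeN : ∀ j ∈ σ.take m, j < N := fun j hj => hσ j (List.mem_of_mem_take hj)
  have hrepN : ∀ j ∈ List.replicate (m - σ.length) 0, j < N := by
    intro j hj
    rw [List.eq_of_mem_replicate hj]; exact hd
  have hdropN : ∀ j ∈ σ.drop m, j < N := fun j hj => hσ j (List.mem_of_mem_drop hj)
  have hxsplit : x = wordComp h (σ.take m) (wordComp h (σ.drop m) 0) := by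
    rw [hx, ← wordComp_append, List.take_append_drop]
  have hdrop0 : wordComp h (σ.drop m) 0 ∈ Icc (0:ℝ) 1 :=
    word_mapsTo cs hdropN (by norm_num)
  have hrep1 : wordComp h (List.replicate (m - σ.length) 0) 1 ∈ Icc (0:ℝ) 1 :=
    word_mapsTo cs hrepN (by norm_num)
  constructor
  · rw [seqComp, hword, wordComp_append, word_replicate_bot cs, hxsplit]
    exact word_mono cs htakeN (by norm_num) hdrop0 hdrop0.1
  · rw [seqComp, hword, wordComp_append, hxsplit]
    apply word_mono cs htakeN hdrop0 hrep1
    by_cases hm : m ≤ σ.length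
    · have : m - σ.length = 0 := by omega
      rw [this]
      simpa [wordComp_nil] using hdrop0.2
    · have : σ.drop m = [] := List.drop_eq_nil_of_le (by omega)
      rw [this, wordComp_nil]
      exact hrep1.1

lemma not_both {s : ℕ → ℕ} (hA : ∃ n, ∀ k, n < k → s k = N - 1)
    (hB : ∃ m, ∀ k, m < k → s k = 0) : False := by
  obtain ⟨n, hn⟩ := hA
  obtain ⟨m, hm⟩ := hB
  have h1 := hn (n + m + 1) (by omega)
  have h2 := hm (n + m + 1) (by omega)
  omega

lemma pair_tails {x : ℝ} {p q : ℕ → ℕ} (hp : p ∈ limSeqs N h x) (hq : q ∈ limSeqs N h x)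
    (hne : p ≠ q) :
    (∃ n, (∀ k, n < k → p k = N - 1) ∧ (∀ k, n < k → q k = 0)) ∨
    (∃ n, (∀ k, n < k → p k = 0) ∧ (∀ k, n < k → q k = N - 1)) := by
  classical
  have hex : ∃ k, p k ≠ q k := by
    by_contra hc
    push_neg at hc
    exact hne (funext hc)
  set n := Nat.find hex with hn
  have hdiff : p n ≠ q n := Nat.find_spec hex
  have hpre : ∀ k < n, p k = q k := fun k hk => by
    by_contra hc
    exact absurd (Nat.find_min' hex hc) (by omega)
  rcases lt_or_gt_of_ne hdiff with hlt | hgt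
  · obtain ⟨h1, h2, _, _⟩ := lemB cs hp hq hpre hlt
    exact Or.inl ⟨n, h1, h2⟩
  · obtain ⟨h1, h2, _, _⟩ := lemB cs hq hp (fun k hk => (hpre k hk).symm) hgt
    exact Or.inr ⟨n, h2, h1⟩

lemma eq_of_not_DSet {x : ℝ} (hxD : x ∉ DSet N h \ ({0,1} : Set ℝ))
    {p q : ℕ → ℕ} (hp : p ∈ limSeqs N h x) (hq : q ∈ limSeqs N h x) : p = q := by
  classical
  by_contra hne
  have hex : ∃ k, p k ≠ q k := by
    by_contra hc
    push_neg at hc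
    exact hne (funext hc)
  set n := Nat.find hex with hn
  have hdiff : p n ≠ q n := Nat.find_spec hex
  have hpre : ∀ k < n, p k = q k := fun k hk => by
    by_contra hc
    exact absurd (Nat.find_min' hex hc) (by omega)
  rcases lt_or_gt_of_ne hdiff with hlt | hgt
  · obtain ⟨_, _, hsucc, hxeq⟩ := lemB cs hp hq hpre hlt
    exact hxD (mem_DSet_diff cs (mem_ofFn_lt hp.1 n) (hsucc ▸ hq.1 n) hxeq)
  · obtain ⟨_, _, hsucc, hxeq⟩ := lemB cs hq hp (fun k hk => (hpre k hk).symm) hgt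
    exact hxD (mem_DSet_diff cs (mem_ofFn_lt hq.1 n) (hsucc ▸ hp.1 n) hxeq)

end Final
end StmtAux

/-- for a D-system, every `x ∈ [0,1]` admits such an infinite address;
if `x ∈ 𝓓_h \ {0,1}` there are exactly two addresses, otherwise exactly one. -/
theorem stmt1 (N : ℕ) (hN : 2 ≤ N) (h : ℕ → ℝ → ℝ) (hD : IsDSystem N h)
    (x : ℝ) (hx : x ∈ Set.Icc (0:ℝ) 1) :
    (limSeqs N h x).Nonempty ∧
    (x ∈ DSet N h \ {0, 1} → ∃ u v : ℕ → ℕ, u ≠ v ∧ limSeqs N h x = {u, v}) ∧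
    (x ∉ DSet N h \ {0, 1} → ∃! u : ℕ → ℕ, u ∈ limSeqs N h x) := by
  classical
  obtain ⟨cs, hdense⟩ := hD
  open StmtAux in
  refine ⟨⟨addr cs hN x, addr_mem_limSeqs cs hN hdense hx⟩, ?_, ?_⟩
  · rintro ⟨hxD, hx01⟩
    have hx0 : x ≠ 0 := fun hc => hx01 (by simp [hc])
    have hx1 : x ≠ 1 := fun hc => hx01 (by simp [hc])
    obtain ⟨τ, c, hτN, hc, hxeq⟩ := normalize cs hN hxD hx0 hx1
    have hσuN : ∀ j ∈ τ ++ [c], j < N := by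
      intro j hj
      rcases List.mem_append.mp hj with hj | hj
      · exact hτN j hj
      · simp at hj; omega
    have hσvN : ∀ j ∈ τ ++ [c+1], j < N := by
      intro j hj
      rcases List.mem_append.mp hj with hj | hj
      · exact hτN j hj
      · simp at hj; omega
    set u : ℕ → ℕ := fun k => (τ ++ [c]).getD k (N-1) with hu
    set v : ℕ → ℕ := fun k => (τ ++ [c+1]).getD k 0 with hv
    have hxu : x = wordComp h (τ ++ [c]) 1 := by
      rw [wordComp_append, wordComp_cons, wordComp_nil, hxeq]
    have hxv : x = wordComp h (τ ++ [c+1]) 0 := by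
      have hlink : h c 1 = h (c+1) 0 := by
        simpa using cs.2.2.2.2.1 (c+1) (by omega) hc
      rw [wordComp_append, wordComp_cons, wordComp_nil, hxeq, hlink]
    have hmemu : u ∈ limSeqs N h x := memU cs hN hdense hσuN hxu
    have hmemv : v ∈ limSeqs N h x := memV cs hN hdense hσvN hxv
    have htailu : ∀ k, τ.length < k → u k = N - 1 := by
      intro k hk
      rw [hu]
      exact List.getD_eq_default _ _ (by simp; omega)
    have htailv : ∀ k, τ.length < k → v k = 0 := by
      intro k hk
      rw [hv]
      exact List.getD_eq_default _ _ (by simp; omega)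
    have hTailU : ∃ n, ∀ k, n < k → u k = N - 1 := ⟨τ.length, htailu⟩
    have hTail0V : ∃ n, ∀ k, n < k → v k = 0 := ⟨τ.length, htailv⟩
    have huv : u ≠ v := by
      intro hc'
      have h1 := htailu (τ.length + 1) (by omega)
      have h2 := htailv (τ.length + 1) (by omega)
      rw [hc'] at h1
      omega
    refine ⟨u, v, huv, ?_⟩
    ext w
    constructor
    · intro hw
      by_contra hwc
      simp only [Set.mem_insert_iff, Set.mem_singleton_iff] at hwc
      push_neg at hwc
      obtain ⟨hwu, hwv⟩ := hwc
      have hTail0W : ∃ n, ∀ k, n < k → w k = 0 := by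
        rcases pair_tails cs hN hmemu hw (fun e => hwu e.symm) with ⟨n, h1, h2⟩ | ⟨n, h1, h2⟩
        · exact ⟨n, h2⟩
        · exact absurd (not_both cs hN hTailU ⟨n, h1⟩) (fun f => f)
      have hTailN1W : ∃ n, ∀ k, n < k → w k = N - 1 := by
        rcases pair_tails cs hN hmemv hw (fun e => hwv e.symm) with ⟨n, h1, h2⟩ | ⟨n, h1, h2⟩
        · exact absurd (not_both cs hN ⟨n, h1⟩ hTail0V) (fun f => f)
        · exact ⟨n, h2⟩
      exact not_both cs hN hTailN1W hTail0W
    · intro hw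
      rcases hw with hw | hw
      · rw [hw]; exact hmemu
      · rw [mem_singleton_iff] at hw
        rw [hw]; exact hmemv
  · intro hxD
    exact ⟨addr cs hN x, addr_mem_limSeqs cs hN hdense hx,
      fun y hy => eq_of_not_DSet cs hN hxD hy (addr_mem_limSeqs cs hN hdense hx)⟩
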